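/- (Left post-inverse of *.) For every Λ$-term M, M ↠Λ$ M^{*#}; and if M is a value, then also M ↠Λ$ M^{†♮}. -/

import Mathlib

namespace Shift0

/-! ### The calculus Λ$ (de Bruijn representation) -/

/-- Terms of Λ$: variables, λ-abstractions, freeze `$(M)`, application, thaw `S₀(M)`. -/
inductive Tm : Type
  | var : Nat → Tm
  | lam : Tm → Tm
  | freeze : Tm → Tm
  | app : Tm → Tm → Tm
  | thaw : Tm → Tm
  deriving DecidableEq

namespace Tm

/-- Values of Λ$: variables, abstractions and frozen terms. -/
inductive IsValue : Tm → Prop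
  | var (n : Nat) : IsValue (.var n)
  | lam (M : Tm) : IsValue (.lam M)
  | freeze (M : Tm) : IsValue (.freeze M)

/-- Nonvalues of Λ$: applications and thawed terms. -/
inductive IsNonvalue : Tm → Prop
  | app (M N : Tm) : IsNonvalue (.app M N)
  | thaw (M : Tm) : IsNonvalue (.thaw M)

/-- Boolean value test. -/
def isVal : Tm → Bool
  | .var _ => true
  | .lam _ => true
  | .freeze _ => true
  | .app _ _ => false
  | .thaw _ => false

/-- Lift (shift) the free de Bruijn variables `≥ d` up by one. -/
def lift (d : Nat) : Tm → Tm
  | .var n => if n < d then .var n else .var (n+1)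
  | .lam M => .lam (lift (d+1) M)
  | .freeze M => .freeze (lift d M)
  | .app M N => .app (lift d M) (lift d N)
  | .thaw M => .thaw (lift d M)

/-- Capture-avoiding substitution `M[N/x]` (for the de Bruijn variable `x`);
the variables above `x` are shifted down by one. -/
def subst : Tm → Nat → Tm → Tm
  | .var n, x, N => if n = x then N else if n < x then .var n else .var (n-1)
  | .lam M, x, N => .lam (subst M (x+1) (N.lift 0))
  | .freeze M, x, N => .freeze (subst M x N)
  | .app M L, x, N => .app (subst M x N) (subst L x N)
  | .thaw M, x, N => .thaw (subst M x N)

/-- `M $ N` is sugar for `$(N) M`. -/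
def dol (M N : Tm) : Tm := .app (.freeze N) M

/-- `let x = M in N` is sugar for `S₀k.((λx.(k $ N)) $ M)`;
here `N` has the let-bound variable as de Bruijn index `0`. -/
def letIn (M N : Tm) : Tm :=
  .thaw (.lam (dol (.lam (dol (.var 1) (N.lift 1))) (M.lift 0)))

end Tm

/-- Bindable contexts `J ::= [] M | V [] | S₀([])`. -/
inductive JCtx : Type
  | appL : Tm → JCtx
  | appR : Tm → JCtx
  | thaw : JCtx

namespace JCtx

/-- Well-formedness: in `V []` the term `V` must be a value. -/
def Wf : JCtx → Prop
  | .appL _ => True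
  | .appR V => V.IsValue
  | .thaw => True

/-- Plugging a term into a bindable context. -/
def plug : JCtx → Tm → Tm
  | .appL N, M => .app M N
  | .appR V, M => .app V M
  | .thaw, M => .thaw M

/-- Lift the free variables `≥ d` of a bindable context. -/
def lift (d : Nat) : JCtx → JCtx
  | .appL N => .appL (N.lift d)
  | .appR V => .appR (V.lift d)
  | .thaw => .thaw

end JCtx

/-- Pure contexts `K ::= [] | J[K]`, represented as a list of bindable
contexts (head outermost). -/
abbrev KCtx : Type := List JCtx

/-- Plugging a term into a pure context. -/
def KCtx.plug : KCtx → Tm → Tm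
  | [], M => M
  | (J :: K), M => J.plug (KCtx.plug K M)

/-- Well-formedness of a pure context. -/
def KCtx.Wf (K : KCtx) : Prop := ∀ J ∈ K, JCtx.Wf J

/-- Lift the free variables `≥ d` of a pure context. -/
def KCtx.lift (d : Nat) (K : KCtx) : KCtx := K.map (JCtx.lift d)

namespace Tm

/-- The basic contractions of Λ$. -/
inductive Contr : Tm → Tm → Prop
  | betav (M V : Tm) : V.IsValue → Contr (.app (.lam M) V) (M.subst 0 V)
  | etav (V : Tm) : V.IsValue → Contr (.lam (.app (V.lift 0) (.var 0))) V
  | dolv (V : Tm) : V.IsValue → Contr (.freeze V) (.lam (.app (.var 0) (V.lift 0)))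
  | dolsh (V : Tm) : V.IsValue → Contr (.freeze (.thaw V)) V
  | shdol (M : Tm) : Contr (.thaw (.freeze M)) M
  | pure (V : Tm) : V.IsValue → Contr (.thaw (.lam (.app (.var 0) (V.lift 0)))) V
  | bind (J : JCtx) (P : Tm) : J.Wf → P.IsNonvalue →
      Contr (J.plug P) (letIn P ((J.lift 0).plug (.var 0)))

/-- One-step reduction of Λ$: closure of the contractions under arbitrary
contexts (including under binders). -/
inductive Step : Tm → Tm → Prop
  | contr {M N : Tm} : Contr M N → Step M N
  | lam {M N : Tm} : Step M N → Step (.lam M) (.lam N)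
  | freeze {M N : Tm} : Step M N → Step (.freeze M) (.freeze N)
  | appL {M N L : Tm} : Step M N → Step (.app M L) (.app N L)
  | appR {M N L : Tm} : Step M N → Step (.app L M) (.app L N)
  | thaw {M N : Tm} : Step M N → Step (.thaw M) (.thaw N)

/-- Multi-step reduction `↠Λ$`. -/
def Steps : Tm → Tm → Prop := Relation.ReflTransGen Step

/-- Convertibility `=Λ$`: the equivalence generated by reduction. -/
def Equiv : Tm → Tm → Prop := Relation.EqvGen Step

end Tm

/-! ### The pure λ-calculus with βη -/

/-- Terms of the pure λ-calculus. -/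
inductive Lam : Type
  | var : Nat → Lam
  | lam : Lam → Lam
  | app : Lam → Lam → Lam
  deriving DecidableEq

namespace Lam

/-- Lift the free de Bruijn variables `≥ d` up by one. -/
def lift (d : Nat) : Lam → Lam
  | .var n => if n < d then .var n else .var (n+1)
  | .lam M => .lam (lift (d+1) M)
  | .app M N => .app (lift d M) (lift d N)

/-- Capture-avoiding substitution `M[N/x]`. -/
def subst : Lam → Nat → Lam → Lam
  | .var n, x, N => if n = x then N else if n < x then .var n else .var (n-1)
  | .lam M, x, N => .lam (subst M (x+1) (N.lift 0))
  | .app M L, x, N => .app (subst M x N) (subst L x N)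

/-- β and η contractions. -/
inductive Contr : Lam → Lam → Prop
  | beta (M N : Lam) : Contr (.app (.lam M) N) (M.subst 0 N)
  | eta (M : Lam) : Contr (.lam (.app (M.lift 0) (.var 0))) M

/-- One-step βη-reduction, closed under arbitrary contexts. -/
inductive Step : Lam → Lam → Prop
  | contr {M N : Lam} : Contr M N → Step M N
  | lam {M N : Lam} : Step M N → Step (.lam M) (.lam N)
  | appL {M N L : Lam} : Step M N → Step (.app M L) (.app N L)
  | appR {M N L : Lam} : Step M N → Step (.app L M) (.app L N)

/-- Multi-step βη-reduction `↠λ`. -/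
def Steps : Lam → Lam → Prop := Relation.ReflTransGen Step

/-- βη-convertibility `=λ`. -/
def Equiv : Lam → Lam → Prop := Relation.EqvGen Step

end Lam

end Shift0

namespace Shift0

/-! ### The CPS translation `* : Λ$ → λ` and its value part `†` -/

mutual

/-- The CPS translation `M*`.  It is the full unfolding of the equations
`V* = λk.k V†`, `J[P]* = λk.P* (λx.(J[x]* k))`, `(V W)* = V† W†` and
`(S₀(V))* = V†`. -/
def cps : Tm → Lam
  | .var n => .lam (.app (.var 0) (.var (n+1)))
  | .lam M => .lam (.app (.var 0) ((Lam.lam (cps M)).lift 0))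
  | .freeze M => .lam (.app (.var 0) ((cps M).lift 0))
  | .app M N =>
      if M.isVal then
        if N.isVal then .app (cpsV M) (cpsV N)
        else
          .lam (.app ((cps N).lift 0)
            (.lam (.app (.app (((cpsV M).lift 0).lift 0) (.var 0)) (.var 1))))
      else
        if N.isVal then
          .lam (.app ((cps M).lift 0)
            (.lam (.app (.app (.var 0) (((cpsV N).lift 0).lift 0)) (.var 1))))
        else
          .lam (.app ((cps M).lift 0)
            (.lam (.app
              (.lam (.app ((((cps N).lift 0).lift 0).lift 0)
                (.lam (.app (.app (.var 2) (.var 0)) (.var 1)))))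
              (.var 1))))
  | .thaw M =>
      if M.isVal then cpsV M
      else .lam (.app ((cps M).lift 0) (.lam (.app (.var 0) (.var 1))))

/-- The value part `V†` of the CPS translation (junk on nonvalues). -/
def cpsV : Tm → Lam
  | .var n => .var n
  | .lam M => .lam (cps M)
  | .freeze M => cps M
  | .app _ _ => .var 0
  | .thaw _ => .var 0

end

/-! ### The direct-style translation `# : λ → Λ$` and its auxiliary `♮` -/

namespace Lam

/-- Does the de Bruijn variable `x` occur free in the term? -/
def hasVar (x : Nat) : Lam → Bool
  | .var n => n = x
  | .lam M => hasVar (x+1) M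
  | .app M N => hasVar x M || hasVar x N

/-- Shift the free de Bruijn variables `> d` down by one
(inverse of `lift d` on terms not containing `d` free). -/
def lower (d : Nat) : Lam → Lam
  | .var n => if d < n then .var (n-1) else .var n
  | .lam M => .lam (lower (d+1) M)
  | .app M N => .app (lower d M) (lower d N)

/-- Size of a λ-term. -/
def size : Lam → Nat
  | .var _ => 1
  | .lam M => size M + 1
  | .app M N => size M + size N + 1

theorem size_lower (d : Nat) (M : Lam) : (lower d M).size = M.size := by
  induction M generalizing d with
  | var n => simp only [lower]; split <;> rfl
  | lam M ih => simp [lower, size, ih]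
  | app M N ihM ihN => simp [lower, size, ihM, ihN]

end Lam

mutual

/-- The direct-style translation `M#`; the case `(λx.x N)# = N♮` (with
`x ∉ FV(N)`) is rendered by checking that de Bruijn variable `0` does not
occur in `N` and lowering the remaining variables. -/
def ds : Lam → Tm
  | .var n => .thaw (.var n)
  | .app M N => .app (nat M) (nat N)
  | .lam (.app (.var 0) N) =>
      if N.hasVar 0 then .thaw (.lam (.app (.var 0) (nat N)))
      else nat (N.lower 0)
  | .lam M => .thaw (.lam (ds M))
termination_by M => M.size
decreasing_by all_goals simp [Lam.size, Lam.size_lower] <;> omega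

/-- The auxiliary direct-style translation `M♮`. -/
def nat : Lam → Tm
  | .var n => .var n
  | .lam M => .lam (ds M)
  | .app M N => .freeze (.app (nat M) (nat N))
termination_by M => M.size
decreasing_by all_goals simp [Lam.size, Lam.size_lower] <;> omega

end

end Shift0

namespace Shift0

/-! ### Materzok's calculus λ$ -/

/-- Terms of λ$: variables, abstractions, applications, `S₀x.e`
(the body is under a binder) and `e $ e'`. -/
inductive LTm : Type
  | var : Nat → LTm
  | lam : LTm → LTm
  | app : LTm → LTm → LTm
  | shift : LTm → LTm
  | dollar : LTm → LTm → LTm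
  deriving DecidableEq

namespace LTm

/-- Values of λ$: variables and abstractions. -/
inductive IsValue : LTm → Prop
  | var (n : Nat) : IsValue (.var n)
  | lam (e : LTm) : IsValue (.lam e)

/-- Lift the free de Bruijn variables `≥ d` up by one. -/
def lift (d : Nat) : LTm → LTm
  | .var n => if n < d then .var n else .var (n+1)
  | .lam e => .lam (lift (d+1) e)
  | .app e f => .app (lift d e) (lift d f)
  | .shift e => .shift (lift (d+1) e)
  | .dollar e f => .dollar (lift d e) (lift d f)

/-- Capture-avoiding substitution `e[v/x]`. -/
def subst : LTm → Nat → LTm → LTm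
  | .var n, x, N => if n = x then N else if n < x then .var n else .var (n-1)
  | .lam e, x, N => .lam (subst e (x+1) (N.lift 0))
  | .app e f, x, N => .app (subst e x N) (subst f x N)
  | .shift e, x, N => .shift (subst e (x+1) (N.lift 0))
  | .dollar e f, x, N => .dollar (subst e x N) (subst f x N)

end LTm

/-- Pure contexts of λ$: `E ::= [] | E e | v E | E $ e`. -/
inductive ECtx : Type
  | hole : ECtx
  | appL : ECtx → LTm → ECtx
  | appR : LTm → ECtx → ECtx
  | dolL : ECtx → LTm → ECtx

namespace ECtx

/-- Well-formedness: in `v E` the term `v` must be a value. -/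
def Wf : ECtx → Prop
  | .hole => True
  | .appL E _ => E.Wf
  | .appR v E => v.IsValue ∧ E.Wf
  | .dolL E _ => E.Wf

/-- Plugging a term into a pure context of λ$. -/
def plug : ECtx → LTm → LTm
  | .hole, e => e
  | .appL E f, e => .app (E.plug e) f
  | .appR v E, e => .app v (E.plug e)
  | .dolL E f, e => .dollar (E.plug e) f

/-- Lift the free variables `≥ d` of a pure context. -/
def lift (d : Nat) : ECtx → ECtx
  | .hole => .hole
  | .appL E f => .appL (E.lift d) (f.lift d)
  | .appR v E => .appR (v.lift d) (E.lift d)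
  | .dolL E f => .dolL (E.lift d) (f.lift d)

end ECtx

namespace LTm

/-- The axioms of λ$. -/
inductive Ax : LTm → LTm → Prop
  | betav (e v : LTm) : v.IsValue → Ax (.app (.lam e) v) (e.subst 0 v)
  | etav (v : LTm) : v.IsValue → Ax (.lam (.app (v.lift 0) (.var 0))) v
  | dolv (v w : LTm) : v.IsValue → w.IsValue → Ax (.dollar v w) (.app v w)
  | dolE (v : LTm) (E : ECtx) (e : LTm) : v.IsValue → E.Wf →
      Ax (.dollar v (E.plug e))
         (.dollar (.lam (.dollar (v.lift 0) ((E.lift 0).plug (.var 0)))) e)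
  | betad (v e : LTm) : v.IsValue → Ax (.dollar v (.shift e)) (e.subst 0 v)
  | etad (e : LTm) : Ax (.shift (.dollar (.var 0) (e.lift 0))) e

/-- The axioms applied in an arbitrary context. -/
inductive AStep : LTm → LTm → Prop
  | ax {e f : LTm} : Ax e f → AStep e f
  | lam {e f : LTm} : AStep e f → AStep (.lam e) (.lam f)
  | appL {e f g : LTm} : AStep e f → AStep (.app e g) (.app f g)
  | appR {e f g : LTm} : AStep e f → AStep (.app g e) (.app g f)
  | shift {e f : LTm} : AStep e f → AStep (.shift e) (.shift f)
  | dolL {e f g : LTm} : AStep e f → AStep (.dollar e g) (.dollar f g)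
  | dolR {e f g : LTm} : AStep e f → AStep (.dollar g e) (.dollar g f)

/-- The equational theory `=λ$` generated by the axioms. -/
def Equiv : LTm → LTm → Prop := Relation.EqvGen AStep

end LTm

/-- The embedding `ι : λ$ → Λ$`. -/
def iota : LTm → Tm
  | .var n => .var n
  | .lam e => .lam (iota e)
  | .app e f => .app (iota e) (iota f)
  | .shift e => .thaw (.lam (iota e))
  | .dollar e f => .app (.freeze (iota f)) (iota e)

/-- The translation `π : Λ$ → λ$`. -/
def pi : Tm → LTm
  | .var n => .var n
  | .lam M => .lam (pi M)
  | .freeze M => .lam (.dollar (.var 0) ((pi M).lift 0))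
  | .app M N => .app (pi M) (pi N)
  | .thaw M => .app (.lam (.shift (.app (.var 1) (.var 0)))) (pi M)

/-- Materzok's CPS translation `⟦·⟧ : λ$ → λ` (with the value translation
`⟪x⟫ = x`, `⟪λx.e⟫ = λx.⟦e⟧` inlined). -/
def mcps : LTm → Lam
  | .var n => .lam (.app (.var 0) (.var (n+1)))
  | .lam e => .lam (.app (.var 0) ((Lam.lam (mcps e)).lift 0))
  | .app e f => .lam (.app ((mcps e).lift 0)
      (.lam (.app (((mcps f).lift 0).lift 0)
        (.lam (.app (.app (.var 1) (.var 0)) (.var 2))))))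
  | .shift e => .lam (mcps e)
  | .dollar e f => .lam (.app ((mcps e).lift 0)
      (.lam (.app (.app (((mcps f).lift 0).lift 0) (.var 0)) (.var 1))))

end Shift0

/-!
The claims `M ↠ M^{*#}`, `V ↠ V^{†♮}` and `$(M) ↠ M^{*♮}` are proved together by induction
on the size of `M`; measuring size rather than structure lets the induction hypothesis be
applied to the lifted subterms that end up under new binders. For a value, `V^{*#} = V^{†♮}`
and `$(V) ↦ λk.k V`. The main case is a nonvalue `J[P]` with `P` a nonvalue: (bind) rewrites
it to `S₀k.((λx.(k $ J[x])) $ P)`, while `J[P]^{*♮} = λk.P^{*♮} (λx.J[x]^{*♮} k)`, so it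
suffices that `$(P) ↠ P^{*♮}` and `$(J[x]) ↠ J[x]^{*♮}`, and `J[x]` is smaller than `J[P]`.
Finally `S₀(λk.B#) ↠ (λk.B)#`, by (pure) in the one case where `#` contracts `λx.x N` to `N♮`.
-/

namespace Shift0
namespace Lam

theorem lift_lift (M : Lam) {i j : Nat} (h : i ≤ j) :
    (M.lift j).lift i = (M.lift i).lift (j + 1) := by
  induction M generalizing i j with
  | var n => grind [lift]
  | lam M ih => simp only [lift, ih (Nat.succ_le_succ h)]
  | app M N ihM ihN => simp only [lift, ihM h, ihN h]

theorem hasVar_lift_of_lt (M : Lam) {i d : Nat} (h : i < d) :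
    (M.lift d).hasVar i = M.hasVar i := by
  induction M generalizing i d with
  | var n => grind [lift, hasVar]
  | lam M ih => exact ih (Nat.succ_lt_succ h)
  | app M N ihM ihN => simp only [lift, hasVar, ihM h, ihN h]

theorem hasVar_lift_self (M : Lam) (d : Nat) : (M.lift d).hasVar d = false := by
  induction M generalizing d with
  | var n => grind [lift, hasVar]
  | lam M ih => exact ih (d + 1)
  | app M N ihM ihN => simp only [lift, hasVar, ihM, ihN, Bool.or_self]

theorem lower_lift_self (M : Lam) (d : Nat) : (M.lift d).lower d = M := by
  induction M generalizing d with
  | var n => grind [lift, lower]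
  | lam M ih => simp only [lift, lower, ih]
  | app M N ihM ihN => simp only [lift, lower, ihM, ihN]

theorem lift_lower (M : Lam) {d : Nat} (h : M.hasVar d = false) : (M.lower d).lift d = M := by
  induction M generalizing d with
  | var n => grind [lift, lower, hasVar]
  | lam M ih => simp only [lift, lower, ih h]
  | app M N ihM ihN =>
    simp only [hasVar, Bool.or_eq_false_iff] at h
    simp only [lift, lower, ihM h.1, ihN h.2]

theorem lower_lift_comm (M : Lam) {c d : Nat} (h : M.hasVar c = false) :
    (M.lift (c + d + 1)).lower c = (M.lower c).lift (c + d) := by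
  induction M generalizing c with
  | var n => grind [lift, lower, hasVar]
  | lam M ih =>
    have := ih (c := c + 1) h
    simp only [lift, lower]
    grind
  | app M N ihM ihN =>
    simp only [hasVar, Bool.or_eq_false_iff] at h
    simp only [lift, lower, ihM h.1, ihN h.2]

theorem lift_succ_ne_app_var_zero {M : Lam} (hM : ∀ N, M ≠ .app (.var 0) N) (d : Nat)
    (N : Lam) : M.lift (d + 1) ≠ .app (.var 0) N := by
  rcases M with _ | _ | ⟨_ | _ | _, _⟩ <;> grind [lift]

end Lam

namespace Tm

def size : Tm → Nat
  | .var _ => 1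
  | .lam M => size M + 1
  | .freeze M => size M + 1
  | .app M N => size M + size N + 1
  | .thaw M => size M + 1

theorem size_pos (M : Tm) : 0 < M.size := by
  cases M <;> simp only [size] <;> omega

theorem size_lift (M : Tm) (d : Nat) : (M.lift d).size = M.size := by
  induction M generalizing d <;> grind [lift, size]

theorem IsValue.lift {V : Tm} (hV : V.IsValue) (d : Nat) : (V.lift d).IsValue := by
  cases hV with
  | var n => simp only [Tm.lift]; split <;> exact .var _
  | lam M => exact .lam _
  | freeze M => exact .freeze _

theorem IsValue.isVal_eq_true {V : Tm} (hV : V.IsValue) : V.isVal = true := by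
  cases hV <;> rfl

theorem IsNonvalue.isVal_eq_false {P : Tm} (hP : P.IsNonvalue) : P.isVal = false := by
  cases hP <;> rfl

theorem isVal_eq_true_iff {M : Tm} : M.isVal = true ↔ M.IsValue := by
  constructor
  · cases M <;> simp [isVal] <;> constructor
  · exact IsValue.isVal_eq_true

theorem isVal_lift (M : Tm) (d : Nat) : (M.lift d).isVal = M.isVal := by
  cases M <;> grind [lift, isVal]

end Tm

theorem cps_lift_and_cpsV_lift :
    (∀ M : Tm, ∀ d, cps (M.lift d) = (cps M).lift d) ∧
      (∀ V : Tm, V.IsValue → ∀ d, cpsV (V.lift d) = (cpsV V).lift d) := by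
  apply cps.mutual_induct
  case case1 | case10 => intros; grind [Tm.lift, cps, cpsV, Lam.lift]
  case case13 | case14 => intros; contradiction
  all_goals intros
  all_goals simp_all [Tm.lift, cps, cpsV, Tm.isVal_lift, Tm.isVal_eq_true_iff, Lam.lift,
    Lam.lift_lift]

theorem cps_lift (M : Tm) (d : Nat) : cps (M.lift d) = (cps M).lift d :=
  cps_lift_and_cpsV_lift.1 M d

theorem cpsV_lift {V : Tm} (hV : V.IsValue) (d : Nat) : cpsV (V.lift d) = (cpsV V).lift d :=
  cps_lift_and_cpsV_lift.2 V hV d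

theorem ds_lift_and_nat_lift :
    (∀ e : Lam, ∀ d, ds (e.lift d) = (ds e).lift d) ∧
      (∀ e : Lam, ∀ d, nat (e.lift d) = (nat e).lift d) := by
  apply ds.mutual_induct
  case case1 | case6 => intros; grind [Tm.lift, ds, nat, Lam.lift]
  case case3 =>
    intro N hN ih d
    have hN' : (N.lift (d + 1)).hasVar 0 = true := by rwa [Lam.hasVar_lift_of_lt N d.succ_pos]
    simp [Lam.lift, ds, hN, hN', ih, Tm.lift]
  case case4 =>
    intro N hN ih d
    have hN0 : N.hasVar 0 = false := by simpa using hN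
    have hN' : (N.lift (d + 1)).hasVar 0 = false := by rwa [Lam.hasVar_lift_of_lt N d.succ_pos]
    have hlower : (N.lift (d + 1)).lower 0 = (N.lower 0).lift d := by
      simpa using Lam.lower_lift_comm N (d := d) hN0
    simp [Lam.lift, ds, hN0, hN', hlower, ih]
  case case5 =>
    intro M hM ih d
    rw [Lam.lift, ds.eq_4 _ (Lam.lift_succ_ne_app_var_zero hM d), ds.eq_4 _ hM, ih]; rfl
  all_goals intros
  all_goals simp_all [Tm.lift, ds, nat, Lam.lift]

namespace Tm

theorem isNonvalue_of_not_isValue {M : Tm} (hM : ¬M.IsValue) : M.IsNonvalue := by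
  cases M with
  | var n => exact absurd (.var n) hM
  | lam M => exact absurd (.lam M) hM
  | freeze M => exact absurd (.freeze M) hM
  | app M N => exact .app M N
  | thaw M => exact .thaw M

theorem size_lt_size_plug (J : JCtx) (P : Tm) : P.size < (J.plug P).size := by
  cases J <;> simp only [JCtx.plug, size] <;> omega

theorem size_plug_var_lt {P : Tm} (hP : P.IsNonvalue) (J : JCtx) :
    ((J.lift 0).plug (.var 0)).size < (J.plug P).size := by
  rcases hP with ⟨M, N⟩ | M <;> have := M.size_pos <;> cases J <;>
    simp only [JCtx.lift, JCtx.plug, size, size_lift] <;> omega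

namespace Steps

theorem refl (M : Tm) : Steps M M := Relation.ReflTransGen.refl

theorem head {M N L : Tm} (h : Step M N) (h' : Steps N L) : Steps M L :=
  Relation.ReflTransGen.head h h'

theorem trans {M N L : Tm} (h : Steps M N) (h' : Steps N L) : Steps M L :=
  Relation.ReflTransGen.trans h h'

theorem lam {M N : Tm} (h : Steps M N) : Steps (.lam M) (.lam N) :=
  Relation.ReflTransGen.lift Tm.lam (fun _ _ => Step.lam) _ _ h

theorem freeze {M N : Tm} (h : Steps M N) : Steps (.freeze M) (.freeze N) :=
  Relation.ReflTransGen.lift Tm.freeze (fun _ _ => Step.freeze) _ _ h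

theorem thaw {M N : Tm} (h : Steps M N) : Steps (.thaw M) (.thaw N) :=
  Relation.ReflTransGen.lift Tm.thaw (fun _ _ => Step.thaw) _ _ h

theorem appL {M N L : Tm} (h : Steps M N) : Steps (.app M L) (.app N L) :=
  Relation.ReflTransGen.lift (fun X => Tm.app X L) (fun _ _ => Step.appL) _ _ h

theorem appR {M N L : Tm} (h : Steps M N) : Steps (.app L M) (.app L N) :=
  Relation.ReflTransGen.lift (Tm.app L) (fun _ _ => Step.appR) _ _ h

end Steps

end Tm

theorem nat_isValue (e : Lam) : (nat e).IsValue := by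
  cases e with
  | var n => rw [nat]; exact .var n
  | lam M => rw [nat]; exact .lam _
  | app M N => rw [nat]; exact .freeze _

theorem nat_lift (e : Lam) (d : Nat) : nat (e.lift d) = (nat e).lift d :=
  ds_lift_and_nat_lift.2 e d

theorem steps_thaw_lam_ds (B : Lam) : Tm.Steps (.thaw (.lam (ds B))) (ds (.lam B)) := by
  by_cases hB : ∃ N, B = .app (.var 0) N
  · obtain ⟨N, rfl⟩ := hB
    rw [ds.eq_3]
    split
    next => simp only [ds, nat]; exact .refl _
    next hN =>
      have hlift : nat N = (nat (N.lower 0)).lift 0 := by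
        rw [← nat_lift, Lam.lift_lower N (by simpa using hN)]
      simp only [ds, nat, hlift]
      exact .head (.contr (.pure _ (nat_isValue _))) (.refl _)
  · rw [ds.eq_4 B fun N h => hB ⟨N, h⟩]
    exact .refl _

theorem cps_of_isValue {V : Tm} (hV : V.IsValue) :
    cps V = .lam (.app (.var 0) ((cpsV V).lift 0)) := by
  cases hV <;> simp [cps, cpsV, Lam.lift]

theorem ds_cps_of_isValue {V : Tm} (hV : V.IsValue) : ds (cps V) = nat (cpsV V) := by
  rw [cps_of_isValue hV, ds.eq_3, if_neg (by simp [Lam.hasVar_lift_self]), Lam.lower_lift_self]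

theorem cps_plug {J : JCtx} (hJ : J.Wf) {P : Tm} (hP : P.IsNonvalue) :
    cps (J.plug P) = .lam (.app (cps (P.lift 0))
      (.lam (.app (cps (((J.lift 0).plug (.var 0)).lift 1)) (.var 1)))) := by
  rcases J with N | V | _
  · by_cases hN : N.IsValue
    · simp [JCtx.plug, JCtx.lift, cps, cpsV, (Tm.IsValue.var 0).isVal_eq_true,
        hP.isVal_eq_false, hN.isVal_eq_true, Tm.lift, cps_lift, cpsV_lift hN,
        cpsV_lift (hN.lift 0), Tm.isVal_lift, Lam.lift_lift]
    · simp [JCtx.plug, JCtx.lift, cps, cpsV, (Tm.IsValue.var 0).isVal_eq_true,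
        hP.isVal_eq_false, (Tm.isNonvalue_of_not_isValue hN).isVal_eq_false, Tm.lift, cps_lift,
        Tm.isVal_lift, Lam.lift, Lam.lift_lift]
  · have hV : V.IsValue := hJ
    simp [JCtx.plug, JCtx.lift, cps, cpsV, (Tm.IsValue.var 0).isVal_eq_true,
      hP.isVal_eq_false, hV.isVal_eq_true, Tm.lift, cps_lift, cpsV_lift hV, cpsV_lift (hV.lift 0),
      Tm.isVal_lift, Lam.lift_lift]
  · simp [JCtx.plug, JCtx.lift, cps, cpsV, (Tm.IsValue.var 0).isVal_eq_true,
      hP.isVal_eq_false, Tm.lift, cps_lift]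

namespace Tm

def ReducesToDsCps (M : Tm) : Prop :=
  Steps M (ds (cps M)) ∧ Steps (.freeze M) (nat (cps M))

theorem steps_nat_cpsV {V : Tm} (hV : V.IsValue)
    (ih : ∀ N : Tm, N.size < V.size → N.ReducesToDsCps) : Steps V (nat (cpsV V)) := by
  cases hV with
  | var n => rw [cpsV, nat]; exact .refl _
  | lam M =>
    rw [cpsV, nat]
    exact (ih M (by simp only [size]; omega)).1.lam
  | freeze M => exact (ih M (by simp only [size]; omega)).2

theorem reducesToDsCps_of_isValue {V : Tm} (hV : V.IsValue)
    (ih : ∀ N : Tm, N.size < V.size → N.ReducesToDsCps) : V.ReducesToDsCps := by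
  refine ⟨by rw [ds_cps_of_isValue hV]; exact steps_nat_cpsV hV ih, ?_⟩
  have hlift : Steps (V.lift 0) (nat (cpsV (V.lift 0))) :=
    steps_nat_cpsV (hV.lift 0) (by rwa [size_lift])
  rw [cps_of_isValue hV, ← cpsV_lift hV, nat, ds, nat]
  exact .head (.contr (.dolv V hV)) hlift.appR.lam

theorem reducesToDsCps_app {V W : Tm} (hV : V.IsValue) (hW : W.IsValue)
    (ih : ∀ N : Tm, N.size < (app V W).size → N.ReducesToDsCps) :
    (app V W).ReducesToDsCps := by
  have h : Steps (app V W) (app (nat (cpsV V)) (nat (cpsV W))) :=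
    (steps_nat_cpsV hV fun N hN => ih N (by simp only [size]; omega)).appL.trans
      (steps_nat_cpsV hW fun N hN => ih N (by simp only [size]; omega)).appR
  have hcps : cps (app V W) = .app (cpsV V) (cpsV W) := by
    simp [cps, hV.isVal_eq_true, hW.isVal_eq_true]
  rw [ReducesToDsCps, hcps, ds, nat]
  exact ⟨h, h.freeze⟩

theorem reducesToDsCps_thaw {V : Tm} (hV : V.IsValue)
    (ih : ∀ N : Tm, N.size < (thaw V).size → N.ReducesToDsCps) :
    (thaw V).ReducesToDsCps := by
  have ih' : ∀ N : Tm, N.size < V.size → N.ReducesToDsCps :=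
    fun N hN => ih N (by simp only [size]; omega)
  have hcps : cps (thaw V) = cpsV V := by simp [cps, hV.isVal_eq_true]
  refine ⟨?_, .head (.contr (.dolsh V hV)) (hcps ▸ steps_nat_cpsV hV ih')⟩
  rw [hcps]
  cases hV with
  | var n => rw [cpsV, ds]; exact .refl _
  | lam M =>
    rw [cpsV]
    exact (ih' M (by simp only [size]; omega)).1.lam.thaw.trans (steps_thaw_lam_ds _)
  | freeze M => exact .head (.contr (.shdol M)) (ih' M (by simp only [size]; omega)).1

theorem reducesToDsCps_plug {J : JCtx} (hJ : J.Wf) {P : Tm} (hP : P.IsNonvalue)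
    (ih : ∀ N : Tm, N.size < (J.plug P).size → N.ReducesToDsCps) :
    (J.plug P).ReducesToDsCps := by
  set Jx := (J.lift 0).plug (.var 0)
  have hP' := (ih (P.lift 0) (by rw [size_lift]; exact size_lt_size_plug J P)).2
  have hJx := (ih (Jx.lift 1) (by rw [size_lift]; exact size_plug_var_lt hP J)).2
  have hbody : Steps
      (.lam (.app (.freeze (P.lift 0)) (.lam (.app (.freeze (Jx.lift 1)) (.var 1)))))
      (nat (cps (J.plug P))) := by
    rw [cps_plug hJ hP, nat, ds, nat, ds, nat]
    exact (hP'.appL.trans hJx.appL.lam.appR).lam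
  -- the target is `let x = P in J[x]`, unfolded
  have hbind : Step (J.plug P)
      (.thaw (.lam (.app (.freeze (P.lift 0)) (.lam (.app (.freeze (Jx.lift 1)) (.var 1)))))) :=
    .contr (.bind J P hJ hP)
  refine ⟨.head hbind (hbody.thaw.trans ?_),
    .head hbind.freeze (.head (.contr (.dolsh _ (.lam _))) hbody)⟩
  rw [cps_plug hJ hP, nat]
  exact steps_thaw_lam_ds _

theorem reducesToDsCps (M : Tm) : M.ReducesToDsCps := by
  have ih : ∀ N : Tm, N.size < M.size → N.ReducesToDsCps := fun N _ => reducesToDsCps N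
  cases M with
  | var n => exact reducesToDsCps_of_isValue (.var n) ih
  | lam M => exact reducesToDsCps_of_isValue (.lam M) ih
  | freeze M => exact reducesToDsCps_of_isValue (.freeze M) ih
  | app M N =>
    by_cases hM : M.IsValue
    · by_cases hN : N.IsValue
      · exact reducesToDsCps_app hM hN ih
      · exact reducesToDsCps_plug (J := .appR M) hM (isNonvalue_of_not_isValue hN) ih
    · exact reducesToDsCps_plug (J := .appL N) trivial (isNonvalue_of_not_isValue hM) ih
  | thaw M =>
    by_cases hM : M.IsValue
    · exact reducesToDsCps_thaw hM ih
    · exact reducesToDsCps_plug (J := .thaw) trivial (isNonvalue_of_not_isValue hM) ih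
termination_by M.size

end Tm

/-- **Left post-inverse of `*`.**  For every Λ$-term `M`, `M ↠Λ$ M^{*#}`;
and if `M` is a value, then also `M ↠Λ$ M^{†♮}`. -/
theorem cps_left_post_inverse (M : Tm) :
    Tm.Steps M (ds (cps M)) ∧ (M.IsValue → Tm.Steps M (nat (cpsV M))) :=
  ⟨(Tm.reducesToDsCps M).1, fun hV => Tm.steps_nat_cpsV hV fun N _ => Tm.reducesToDsCps N⟩

end Shift0
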